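/- Let ‖·‖ be a strictly convex norm on ℝ², let ℓ > 0, and suppose that exactly 2m points z ∈ ℤ² satisfy ‖z‖ = ℓ, for some m ≥ 2. Then the number of lattice points z ∈ ℤ² with ‖z‖ < ℓ is at least i₀^symm(2m). -/

import Mathlib

/-!
The lattice points of norm exactly `ℓ` span a polygon `P`, centrally symmetric because the norm
is even. By strict convexity every point of the sphere `N = ℓ` is an extreme point of the ball
`N ≤ ℓ`, hence of `P ⊆ {N ≤ ℓ}`, so `P` is a convex integer `2m`-gon. Since `ℓ > 0`, the interior
of the ball `N ≤ ℓ` lies in the open ball `N < ℓ`, so `i(P)` is at most the number of lattice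
points of norm `< ℓ`. All these lattice point sets are finite because the ball is bounded: being
convex, `N` is continuous, so on the compact Euclidean unit sphere it has a positive minimum.
-/

noncomputable section

/-- The embedding of the integer lattice `ℤ²` into `ℝ²`. -/
def latticeEmbed (z : ℤ × ℤ) : ℝ × ℝ := ((z.1 : ℝ), (z.2 : ℝ))

/-- `P ⊆ ℝ²` is a convex integer `k`-gon: the convex hull of a set `V` of `k` lattice
points, each of which is an extreme point of `P`. -/
def IsConvexIntegerGon (k : ℕ) (P : Set (ℝ × ℝ)) : Prop :=
  ∃ V : Finset (ℤ × ℤ), V.card = k ∧ P = convexHull ℝ (latticeEmbed '' ↑V) ∧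
    ∀ z ∈ V, latticeEmbed z ∈ Set.extremePoints ℝ P

/-- `i(P)`: the number of lattice points in the topological interior of `P`. -/
def interiorLatticeCount (P : Set (ℝ × ℝ)) : ℕ :=
  {z : ℤ × ℤ | latticeEmbed z ∈ interior P}.ncard

/-- `i₀^symm(k)`: the minimum number of interior lattice points of a convex integer
`k`-gon that is centrally symmetric with respect to the origin `(0,0)`. -/
def minInteriorLatticeCountSymm (k : ℕ) : ℕ :=
  sInf {i : ℕ | ∃ P : Set (ℝ × ℝ), IsConvexIntegerGon k P ∧
    (∀ x, x ∈ P ↔ -x ∈ P) ∧ interiorLatticeCount P = i}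

/-- `N` is a strictly convex norm on `ℝ²`. -/
def IsStrictlyConvexNorm (N : ℝ × ℝ → ℝ) : Prop :=
  (∀ x : ℝ × ℝ, x ≠ 0 → 0 < N x) ∧
  (∀ (c : ℝ) (x : ℝ × ℝ), N (c • x) = |c| * N x) ∧
  (∀ x y : ℝ × ℝ, N (x + y) ≤ N x + N y) ∧
  (∀ x y : ℝ × ℝ, LinearIndependent ℝ ![x, y] → N (x + y) < N x + N y)

open Set Filter Topology

section Seminorm

variable {E : Type*}

theorem Seminorm.exists_pos_mul_norm_le [NormedAddCommGroup E] [NormedSpace ℝ E]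
    [FiniteDimensional ℝ E] (p : Seminorm ℝ E) (hp : ∀ x ≠ 0, 0 < p x) :
    ∃ c > 0, ∀ x, c * ‖x‖ ≤ p x := by
  have hcont : Continuous p :=
    continuousOn_univ.mp (p.convexOn.continuousOn isOpen_univ)
  obtain ⟨c, hc, hcp⟩ := (isCompact_sphere (0 : E) 1).exists_forall_le' hcont.continuousOn
    fun x hx ↦ hp x (ne_zero_of_mem_unit_sphere ⟨x, hx⟩)
  refine ⟨c, hc, fun x ↦ ?_⟩
  rcases eq_or_ne x 0 with rfl | hx
  · simp
  have hnorm : 0 < ‖x‖ := norm_pos_iff.mpr hx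
  have hunit := hcp (‖x‖⁻¹ • x) (by simp [norm_smul, hnorm.ne'])
  rwa [map_smul_eq_mul, norm_inv, norm_norm, inv_mul_eq_div, le_div_iff₀ hnorm] at hunit

theorem Seminorm.isBounded_closedBall_of_pos [NormedAddCommGroup E] [NormedSpace ℝ E]
    [FiniteDimensional ℝ E] (p : Seminorm ℝ E) (hp : ∀ x ≠ 0, 0 < p x) (r : ℝ) :
    Bornology.IsBounded (p.closedBall 0 r) := by
  obtain ⟨c, hc, hcp⟩ := p.exists_pos_mul_norm_le hp
  refine (Metric.isBounded_closedBall (x := (0 : E)) (r := r / c)).subset fun x hx ↦ ?_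
  rw [p.mem_closedBall_zero] at hx
  rw [mem_closedBall_zero_iff, le_div_iff₀ hc]
  linarith [hcp x]

theorem Seminorm.interior_closedBall_subset_ball [AddCommGroup E] [Module ℝ E]
    [TopologicalSpace E] [ContinuousSMul ℝ E] (p : Seminorm ℝ E) {r : ℝ} (hr : 0 < r) :
    interior (p.closedBall 0 r) ⊆ p.ball 0 r := by
  intro x hx
  rw [p.mem_ball_zero]
  by_contra! hrx
  have hscale : Tendsto (fun t : ℝ ↦ t • x) (𝓝[>] 1) (𝓝 x) := by
    have hcont : Continuous fun t : ℝ ↦ t • x := continuous_id.smul continuous_const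
    simpa using (hcont.tendsto 1).mono_left nhdsWithin_le_nhds
  obtain ⟨t, htB, ht1⟩ := ((hscale.eventually (isOpen_interior.mem_nhds hx)).and
    self_mem_nhdsWithin).exists
  have htx := p.mem_closedBall_zero.mp (interior_subset htB)
  rw [map_smul_eq_mul, Real.norm_of_nonneg (by linarith [ht1])] at htx
  nlinarith [ht1]

theorem Seminorm.mem_extremePoints_closedBall [AddCommGroup E] [Module ℝ E] (p : Seminorm ℝ E)
    (hp : ∀ x y, LinearIndependent ℝ ![x, y] → p (x + y) < p x + p y) {r : ℝ} (hr : 0 < r)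
    {x : E} (hx : p x = r) : x ∈ (p.closedBall 0 r).extremePoints ℝ := by
  refine ⟨p.mem_closedBall_zero.mpr hx.le, fun x₁ h₁ x₂ h₂ hseg ↦ ?_⟩
  rw [p.mem_closedBall_zero] at h₁ h₂
  obtain ⟨a, b, ha, hb, hab, rfl⟩ := hseg
  have hpa : p (a • x₁) = a * p x₁ := by rw [map_smul_eq_mul, Real.norm_of_nonneg ha.le]
  have hpb : p (b • x₂) = b * p x₂ := by rw [map_smul_eq_mul, Real.norm_of_nonneg hb.le]
  have hle := map_add_le_add p (a • x₁) (b • x₂)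
  have hx₁ : p x₁ = r := by nlinarith
  have hx₂ : p x₂ = r := by nlinarith
  have hax : a • x₁ ≠ 0 := fun h ↦ by
    have := congrArg p h
    rw [map_zero, hpa, hx₁] at this
    nlinarith
  -- equality in the triangle inequality forces `b • x₂` onto the line through `x₁`
  obtain ⟨k, hk⟩ : ∃ k : ℝ, k • (a • x₁) = b • x₂ := by
    by_contra! hne
    have := hp _ _ ((LinearIndependent.pair_iff' hax).mpr hne)
    rw [hx, hpa, hpb, hx₁, hx₂] at this
    nlinarith
  rw [smul_smul] at hk
  have hk_abs : |k * a| = b := by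
    have := congrArg p hk
    rw [map_smul_eq_mul, hpb, hx₁, hx₂, Real.norm_eq_abs] at this
    exact mul_right_cancel₀ hr.ne' this
  have hx₂₁ : x₂ = x₁ := by
    rcases abs_eq hb.le |>.mp hk_abs with hka | hka
    · rw [hka] at hk
      exact (smul_right_injective E hb.ne' hk).symm
    · exfalso
      rw [← hk, hka, ← add_smul, map_smul_eq_mul, hx₁, Real.norm_eq_abs] at hx
      have : |a + -b| < 1 := abs_lt.mpr ⟨by linarith, by linarith⟩
      nlinarith
  subst hx₂₁
  rw [← add_smul, hab, one_smul]

end Seminorm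

theorem neg_mem_convexHull_iff {𝕜 E : Type*} [Ring 𝕜] [PartialOrder 𝕜] [AddCommGroup E]
    [Module 𝕜 E] {s : Set E} (hs : -s = s) {x : E} :
    -x ∈ convexHull 𝕜 s ↔ x ∈ convexHull 𝕜 s := by
  rw [← Set.mem_neg, ← convexHull_neg, hs]

theorem latticeEmbed_neg (z : ℤ × ℤ) : latticeEmbed (-z) = -latticeEmbed z := by
  simp [latticeEmbed]

theorem isometry_latticeEmbed : Isometry latticeEmbed :=
  Real.isometry_intCast.prodMap Real.isometry_intCast

theorem finite_setOf_latticeEmbed_mem {S : Set (ℝ × ℝ)} (hS : Bornology.IsBounded S) :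
    {z : ℤ × ℤ | latticeEmbed z ∈ S}.Finite :=
  (Metric.isCompact_of_isClosed_isBounded (isClosed_discrete _)
    (isometry_latticeEmbed.antilipschitz.isBounded_preimage hS)).finite_of_discrete

def IsStrictlyConvexNorm.toSeminorm {N : ℝ × ℝ → ℝ} (hN : IsStrictlyConvexNorm N) :
    Seminorm ℝ (ℝ × ℝ) :=
  Seminorm.of N hN.2.2.1 fun c x ↦ by rw [hN.2.1, Real.norm_eq_abs]

namespace Seminorm

variable (p : Seminorm ℝ (ℝ × ℝ)) (r : ℝ)

def latticeSphere : Set (ℤ × ℤ) := {z | p (latticeEmbed z) = r}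

theorem neg_latticeSphere : -p.latticeSphere r = p.latticeSphere r := by
  ext z
  simp only [latticeSphere, Set.mem_neg, Set.mem_ofPred, latticeEmbed_neg, map_neg_eq_map]

theorem convexHull_latticeSphere_subset_closedBall :
    convexHull ℝ (latticeEmbed '' p.latticeSphere r) ⊆ p.closedBall 0 r :=
  convexHull_min (image_subset_iff.mpr fun _ hz ↦ p.mem_closedBall_zero.mpr (le_of_eq hz))
    (p.convex_closedBall 0 r)

theorem neg_mem_convexHull_latticeSphere_iff (x : ℝ × ℝ) :
    -x ∈ convexHull ℝ (latticeEmbed '' p.latticeSphere r) ↔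
      x ∈ convexHull ℝ (latticeEmbed '' p.latticeSphere r) := by
  refine neg_mem_convexHull_iff ?_
  rw [← image_neg_of_apply_neg_eq_neg fun z _ ↦ latticeEmbed_neg z, p.neg_latticeSphere]

theorem isConvexIntegerGon_convexHull_latticeSphere
    (hp : ∀ x y, LinearIndependent ℝ ![x, y] → p (x + y) < p x + p y) (hr : 0 < r)
    (hfin : (p.latticeSphere r).Finite) :
    IsConvexIntegerGon (p.latticeSphere r).ncard
      (convexHull ℝ (latticeEmbed '' p.latticeSphere r)) := by
  refine ⟨hfin.toFinset, (ncard_eq_toFinset_card _ hfin).symm, by rw [hfin.coe_toFinset],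
    fun z hz ↦ ?_⟩
  rw [hfin.mem_toFinset] at hz
  exact inter_extremePoints_subset_extremePoints_of_subset
    (p.convexHull_latticeSphere_subset_closedBall r)
    ⟨subset_convexHull ℝ _ (mem_image_of_mem _ hz), p.mem_extremePoints_closedBall hp hr hz⟩

end Seminorm

theorem count_lattice_points_below_level_ge_minInteriorLatticeCountSymm_general
    (N : ℝ × ℝ → ℝ) (hN : IsStrictlyConvexNorm N)
    (ℓ : ℝ) (hℓ : 0 < ℓ) (m : ℕ)
    (hcard : {z : ℤ × ℤ | N (latticeEmbed z) = ℓ}.ncard = 2 * m) :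
    minInteriorLatticeCountSymm (2 * m) ≤ {z : ℤ × ℤ | N (latticeEmbed z) < ℓ}.ncard := by
  set p := hN.toSeminorm
  set P := convexHull ℝ (latticeEmbed '' p.latticeSphere ℓ)
  have hball : {z : ℤ × ℤ | latticeEmbed z ∈ p.closedBall 0 ℓ}.Finite :=
    finite_setOf_latticeEmbed_mem (p.isBounded_closedBall_of_pos hN.1 ℓ)
  have hgon : IsConvexIntegerGon (2 * m) P := by
    rw [← hcard]
    exact p.isConvexIntegerGon_convexHull_latticeSphere ℓ hN.2.2.2 hℓ
      (hball.subset fun z hz ↦ p.mem_closedBall_zero.mpr (le_of_eq hz))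
  have hinterior : interiorLatticeCount P ≤ {z : ℤ × ℤ | N (latticeEmbed z) < ℓ}.ncard := by
    refine ncard_le_ncard (fun z hz ↦ ?_) (hball.subset fun z hz ↦ p.mem_closedBall_zero.mpr hz.le)
    have hPball := p.convexHull_latticeSphere_subset_closedBall ℓ
    exact p.mem_ball_zero.mp (p.interior_closedBall_subset_ball hℓ (interior_mono hPball hz))
  calc minInteriorLatticeCountSymm (2 * m) ≤ interiorLatticeCount P :=
        Nat.sInf_le ⟨P, hgon, fun x ↦ (p.neg_mem_convexHull_latticeSphere_iff ℓ x).symm, rfl⟩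
    _ ≤ {z : ℤ × ℤ | N (latticeEmbed z) < ℓ}.ncard := hinterior

/-- If a strictly convex norm on `ℝ²` takes the value `ℓ > 0` at exactly `2m` lattice
points (`m ≥ 2`), then the number of lattice points of norm `< ℓ` is at least
`i₀^symm(2m)`. -/
theorem count_lattice_points_below_level_ge_minInteriorLatticeCountSymm
    (N : ℝ × ℝ → ℝ) (hN : IsStrictlyConvexNorm N)
    (ℓ : ℝ) (hℓ : 0 < ℓ) (m : ℕ) (hm : 2 ≤ m)
    (hcard : {z : ℤ × ℤ | N (latticeEmbed z) = ℓ}.ncard = 2 * m) :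
    minInteriorLatticeCountSymm (2 * m) ≤ {z : ℤ × ℤ | N (latticeEmbed z) < ℓ}.ncard :=
  count_lattice_points_below_level_ge_minInteriorLatticeCountSymm_general N hN ℓ hℓ m hcard

end
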